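/- arXiv:1604.05350 — 2 statements merged into one kernel-verified Lean document; each statement's English description precedes it below -/
import Mathlib

section
/- The number of strings of length n over an 8-letter alphabet {c₁,...,c₈} avoiding the three families of contiguous patterns (c₆ c₈* c₇), (c₃ (c₁|c₂|c₈)* c₄), and (c₄|c₇)(c₁|c₈)*(c₃|c₆) is Θ(αⁿ) for a constant α < 7.04313, computable as the spectral radius of the transfer matrix of the corresponding pattern-avoiding finite automaton. -/
/-!
Statement 18: the number of strings of length n over an 8-letter alphabet
{c₁,…,c₈} (encoded as Fin 8, cᵢ ↦ i − 1) avoiding the three families of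
contiguous patterns (c₆ c₈* c₇), (c₃ (c₁|c₂|c₈)* c₄) and
(c₄|c₇)(c₁|c₈)*(c₃|c₆) is Θ(αⁿ) for some constant α < 7.04313.
-/

/-- A contiguous occurrence of `c₆ c₈* c₇`. -/
def Pat1 {n : ℕ} (s : Fin n → Fin 8) : Prop :=
  ∃ i j : Fin n, i < j ∧ s i = 5 ∧ s j = 6 ∧
    ∀ k : Fin n, i < k → k < j → s k = 7

/-- A contiguous occurrence of `c₃ (c₁|c₂|c₈)* c₄`. -/
def Pat2 {n : ℕ} (s : Fin n → Fin 8) : Prop :=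
  ∃ i j : Fin n, i < j ∧ s i = 2 ∧ s j = 3 ∧
    ∀ k : Fin n, i < k → k < j → s k ∈ ({0, 1, 7} : Set (Fin 8))

/-- A contiguous occurrence of `(c₄|c₇)(c₁|c₈)*(c₃|c₆)`. -/
def Pat3 {n : ℕ} (s : Fin n → Fin 8) : Prop :=
  ∃ i j : Fin n, i < j ∧ s i ∈ ({3, 6} : Set (Fin 8)) ∧
    s j ∈ ({2, 5} : Set (Fin 8)) ∧
    ∀ k : Fin n, i < k → k < j → s k ∈ ({0, 7} : Set (Fin 8))

/-- The number of strings of length `n` avoiding all three pattern families. -/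
noncomputable def admCount8 (n : ℕ) : ℕ :=
  Nat.card {s : Fin n → Fin 8 // ¬ Pat1 s ∧ ¬ Pat2 s ∧ ¬ Pat3 s}

namespace Adm8

def PatG (A B C : Set (Fin 8)) {n : ℕ} (s : Fin n → Fin 8) : Prop :=
  ∃ i j : Fin n, i < j ∧ s i ∈ A ∧ s j ∈ B ∧ ∀ k : Fin n, i < k → k < j → s k ∈ C

def Avoids {n : ℕ} (s : Fin n → Fin 8) : Prop := ¬ Pat1 s ∧ ¬ Pat2 s ∧ ¬ Pat3 s

lemma pat1_iff {n : ℕ} (s : Fin n → Fin 8) : Pat1 s ↔ PatG {5} {6} {7} s := by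
  simp [Pat1, PatG]

lemma pat2_iff {n : ℕ} (s : Fin n → Fin 8) : Pat2 s ↔ PatG {2} {3} {0,1,7} s := by
  simp [Pat2, PatG]

lemma pat3_iff {n : ℕ} (s : Fin n → Fin 8) : Pat3 s ↔ PatG {3,6} {2,5} {0,7} s := Iff.rfl

lemma avoids_iff {n : ℕ} (s : Fin n → Fin 8) :
    Avoids s ↔ ¬ PatG {5} {6} {7} s ∧ ¬ PatG {2} {3} {0,1,7} s ∧ ¬ PatG {3,6} {2,5} {0,7} s := by
  rw [Avoids, pat1_iff, pat2_iff, pat3_iff]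

lemma patG_castAdd {m n : ℕ} {A B C : Set (Fin 8)} {s : Fin (m+n) → Fin 8}
    (h : PatG A B C (fun i => s (Fin.castAdd n i))) : PatG A B C s := by
  obtain ⟨i, j, hij, hA, hB, hC⟩ := h
  refine ⟨Fin.castAdd n i, Fin.castAdd n j, Fin.lt_def.mpr (by simpa using Fin.lt_def.mp hij), hA, hB, ?_⟩
  intro k hk1 hk2
  have hkm : (k : ℕ) < m := lt_of_lt_of_le (by simpa [Fin.lt_def] using hk2) j.isLt.le
  have hkk : Fin.castAdd n (⟨(k : ℕ), hkm⟩ : Fin m) = k := by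
    apply Fin.ext; simp
  have := hC ⟨(k : ℕ), hkm⟩ (by simpa [Fin.lt_def] using hk1) (by simpa [Fin.lt_def] using hk2)
  simpa [hkk] using this

lemma patG_natAdd {m n : ℕ} {A B C : Set (Fin 8)} {s : Fin (m+n) → Fin 8}
    (h : PatG A B C (fun i => s (Fin.natAdd m i))) : PatG A B C s := by
  obtain ⟨i, j, hij, hA, hB, hC⟩ := h
  refine ⟨Fin.natAdd m i, Fin.natAdd m j, Fin.lt_def.mpr (by simpa using Fin.lt_def.mp hij), hA, hB, ?_⟩
  intro k hk1 hk2
  have hk1' : m + (i : ℕ) < (k : ℕ) := by simpa [Fin.lt_def] using hk1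
  have hk2' : (k : ℕ) < m + (j : ℕ) := by simpa [Fin.lt_def] using hk2
  have hkm : (k : ℕ) - m < n := by have := k.isLt; omega
  have hkk : Fin.natAdd m (⟨(k : ℕ) - m, hkm⟩ : Fin n) = k := by
    apply Fin.ext; simp; omega
  have := hC ⟨(k : ℕ) - m, hkm⟩ (by simp [Fin.lt_def]; omega) (by simp [Fin.lt_def]; omega)
  simpa [hkk] using this

lemma avoids_left {m n : ℕ} {s : Fin (m+n) → Fin 8} (h : Avoids s) :
    Avoids (fun i => s (Fin.castAdd n i)) := by
  rw [avoids_iff] at h ⊢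
  exact ⟨fun hp => h.1 (patG_castAdd hp), fun hp => h.2.1 (patG_castAdd hp),
    fun hp => h.2.2 (patG_castAdd hp)⟩

lemma avoids_right {m n : ℕ} {s : Fin (m+n) → Fin 8} (h : Avoids s) :
    Avoids (fun i => s (Fin.natAdd m i)) := by
  rw [avoids_iff] at h ⊢
  exact ⟨fun hp => h.1 (patG_natAdd hp), fun hp => h.2.1 (patG_natAdd hp),
    fun hp => h.2.2 (patG_natAdd hp)⟩

lemma patG_append_split {m n : ℕ} {A B C : Set (Fin 8)}
    (h4A : (4:Fin 8) ∉ A) (h4B : (4:Fin 8) ∉ B) (h4C : (4:Fin 8) ∉ C)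
    {u : Fin m → Fin 8} {v : Fin n → Fin 8}
    (h : PatG A B C (Fin.append u (Fin.cons 4 v))) :
    PatG A B C u ∨ PatG A B C v := by
  set s : Fin (m + (n+1)) → Fin 8 := Fin.append u (Fin.cons 4 v) with hs
  have hleft : ∀ (a : ℕ) (h1 : a < m) (h2 : a < m + (n+1)), s ⟨a, h2⟩ = u ⟨a, h1⟩ := by
    intro a h1 h2
    exact Fin.append_left u (Fin.cons 4 v) ⟨a, h1⟩
  have hmid : ∀ (h2 : m < m + (n+1)), s ⟨m, h2⟩ = 4 := by
    intro h2
    have : (⟨m, h2⟩ : Fin (m + (n+1))) = Fin.natAdd m (0 : Fin (n+1)) := by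
      apply Fin.ext; simp
    rw [this, hs, Fin.append_right, Fin.cons_zero]
  have hright : ∀ (a : ℕ) (h1 : a - m - 1 < n) (hm : m < a) (h2 : a < m + (n+1)),
      s ⟨a, h2⟩ = v ⟨a - m - 1, h1⟩ := by
    intro a h1 hm h2
    have : (⟨a, h2⟩ : Fin (m + (n+1))) = Fin.natAdd m (Fin.succ ⟨a - m - 1, h1⟩) := by
      apply Fin.ext; simp [Fin.succ]; omega
    rw [this, hs, Fin.append_right, Fin.cons_succ]
  obtain ⟨i, j, hij, hA, hB, hC⟩ := h
  have hij' : (i : ℕ) < (j : ℕ) := hij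
  have hii : i = ⟨(i : ℕ), i.isLt⟩ := rfl
  have hjj : j = ⟨(j : ℕ), j.isLt⟩ := rfl
  have him : (i : ℕ) ≠ m := by
    intro e
    refine h4A ?_
    have hlt : m < m + (n+1) := by have := i.isLt; omega
    have h4 : s ⟨m, hlt⟩ = 4 := hmid _
    rw [← h4]
    rw [hii] at hA
    convert hA using 3
    omega
  have hjm : (j : ℕ) ≠ m := by
    intro e
    refine h4B ?_
    have hlt : m < m + (n+1) := by have := j.isLt; omega
    have h4 : s ⟨m, hlt⟩ = 4 := hmid _
    rw [← h4]
    rw [hjj] at hB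
    convert hB using 3
    omega
  have hcross : ¬ ((i : ℕ) < m ∧ m < (j : ℕ)) := by
    rintro ⟨h1, h2⟩
    have hmlt : m < m + (n+1) := by omega
    have := hC ⟨m, hmlt⟩ (by simpa [Fin.lt_def] using h1) (by simpa [Fin.lt_def] using h2)
    rw [hmid hmlt] at this
    exact h4C this
  rcases lt_or_gt_of_ne him with hi | hi
  · -- i < m, so j < m : pattern in u
    have hj : (j : ℕ) < m := by
      rcases lt_or_gt_of_ne hjm with h | h
      · exact h
      · exact absurd ⟨hi, h⟩ hcross
    left
    refine ⟨⟨(i : ℕ), hi⟩, ⟨(j : ℕ), hj⟩, by simp [Fin.lt_def, hij'], ?_, ?_, ?_⟩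
    · rw [← hleft (i : ℕ) hi i.isLt]; exact hA
    · rw [← hleft (j : ℕ) hj j.isLt]; exact hB
    · intro k hk1 hk2
      simp only [Fin.lt_def] at hk1 hk2
      have hkm : (k : ℕ) < m + (n+1) := by omega
      have := hC ⟨(k : ℕ), hkm⟩ (by rw [Fin.lt_def]; exact hk1) (by rw [Fin.lt_def]; exact hk2)
      rw [hleft (k : ℕ) k.isLt hkm] at this
      simpa using this
  · -- m < i : pattern in v
    right
    have hjn : (j : ℕ) - m - 1 < n := by have := j.isLt; omega
    have hin : (i : ℕ) - m - 1 < n := by omega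
    refine ⟨⟨(i : ℕ) - m - 1, hin⟩, ⟨(j : ℕ) - m - 1, hjn⟩, by simp [Fin.lt_def]; omega, ?_, ?_, ?_⟩
    · rw [← hright (i : ℕ) hin hi i.isLt]; exact hA
    · rw [← hright (j : ℕ) hjn (by omega) j.isLt]; exact hB
    · intro k hk1 hk2
      simp only [Fin.lt_def] at hk1 hk2
      have hkm : m + 1 + (k : ℕ) < m + (n + 1) := by have := k.isLt; omega
      have := hC ⟨m + 1 + (k : ℕ), hkm⟩ (by rw [Fin.lt_def]; simp; omega)
        (by rw [Fin.lt_def]; simp; omega)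
      rw [hright (m + 1 + (k : ℕ)) (by omega) (by omega) hkm] at this
      have hkeq : (⟨m + 1 + (k : ℕ) - m - 1, by omega⟩ : Fin n) = k := by
        apply Fin.ext; simp only [Fin.val_mk]; omega
      rwa [hkeq] at this
def delta (p : Fin 5) (l : Fin 8) : Fin 5 :=
  if p = 4 then 4
  else if (p = 1 ∧ l = 6) ∨ (p = 2 ∧ l = 3) ∨ (p = 3 ∧ (l = 2 ∨ l = 5)) then 4
  else if l = 5 then 1
  else if l = 2 then 2
  else if l = 3 ∨ l = 6 then 3
  else if (p = 1 ∧ l = 7) ∨ (p = 2 ∧ (l = 0 ∨ l = 1 ∨ l = 7)) ∨ (p = 3 ∧ (l = 0 ∨ l = 7)) then p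
  else 0
lemma delta_eq_four {p : Fin 5} {l : Fin 8} (h : delta p l = 4) :
    p = 4 ∨ (p = 1 ∧ l = 6) ∨ (p = 2 ∧ l = 3) ∨ (p = 3 ∧ (l = 2 ∨ l = 5)) := by
  revert h; revert p l; decide
lemma delta_eq_one {p : Fin 5} {l : Fin 8} (h : delta p l = 1) :
    l = 5 ∨ (p = 1 ∧ l = 7) := by revert h; revert p l; decide
lemma delta_eq_two {p : Fin 5} {l : Fin 8} (h : delta p l = 2) :
    l = 2 ∨ (p = 2 ∧ (l = 0 ∨ l = 1 ∨ l = 7)) := by revert h; revert p l; decide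
lemma delta_eq_three {p : Fin 5} {l : Fin 8} (h : delta p l = 3) :
    (l = 3 ∨ l = 6) ∨ (p = 3 ∧ (l = 0 ∨ l = 7)) := by revert h; revert p l; decide
def runA : {n : ℕ} → Fin 5 → (Fin n → Fin 8) → Fin 5
  | 0, p, _ => p
  | _+1, p, s => runA (delta p (s 0)) (Fin.tail s)

def CompG (B C : Set (Fin 8)) {n : ℕ} (s : Fin n → Fin 8) : Prop :=
  ∃ j, s j ∈ B ∧ ∀ k, k < j → s k ∈ C

lemma patG_cons {A B C : Set (Fin 8)} {n : ℕ} {l : Fin 8} {s : Fin n → Fin 8}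
    (h : PatG A B C s) : PatG A B C (Fin.cons l s) := by
  obtain ⟨i, j, hij, hA, hB, hC⟩ := h
  refine ⟨i.succ, j.succ, Fin.succ_lt_succ_iff.mpr hij, by simpa using hA,
    by simpa using hB, ?_⟩
  intro k hk1 hk2
  revert hk1 hk2
  refine Fin.cases ?_ ?_ k
  · intro hk1 _; exact absurd hk1 (Fin.not_lt_zero _)
  · intro k0 hk1 hk2
    rw [Fin.cons_succ]
    exact hC k0 (Fin.succ_lt_succ_iff.mp hk1) (Fin.succ_lt_succ_iff.mp hk2)

lemma compG_cons {B C : Set (Fin 8)} {n : ℕ} {l : Fin 8} {s : Fin n → Fin 8}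
    (hl : l ∈ C) (h : CompG B C s) : CompG B C (Fin.cons l s) := by
  obtain ⟨j, hB, hC⟩ := h
  refine ⟨j.succ, by simpa using hB, ?_⟩
  intro k hk
  revert hk
  refine Fin.cases ?_ ?_ k
  · intro _; simpa using hl
  · intro k0 hk
    rw [Fin.cons_succ]
    exact hC k0 (Fin.succ_lt_succ_iff.mp hk)

lemma compG_start {B C : Set (Fin 8)} {n : ℕ} {l : Fin 8} (s : Fin n → Fin 8)
    (hl : l ∈ B) : CompG B C (Fin.cons l s) :=
  ⟨0, by simpa using hl, fun k hk => absurd hk (Fin.not_lt_zero _)⟩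

lemma compG_patG {A B C : Set (Fin 8)} {n : ℕ} {l : Fin 8} {s : Fin n → Fin 8}
    (hl : l ∈ A) (h : CompG B C s) : PatG A B C (Fin.cons l s) := by
  obtain ⟨j, hB, hC⟩ := h
  refine ⟨0, j.succ, Fin.succ_pos j, by simpa using hl, by simpa using hB, ?_⟩
  intro k hk1 hk2
  revert hk1 hk2
  refine Fin.cases ?_ ?_ k
  · intro hk1 _; exact absurd hk1 (lt_irrefl _)
  · intro k0 _ hk2
    rw [Fin.cons_succ]
    exact hC k0 (Fin.succ_lt_succ_iff.mp hk2)

lemma sound : ∀ {n : ℕ} (p : Fin 5) (s : Fin n → Fin 8), runA p s = 4 →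
    p = 4 ∨ (p = 1 ∧ CompG {6} {7} s) ∨ (p = 2 ∧ CompG {3} {0,1,7} s) ∨
    (p = 3 ∧ CompG {2,5} {0,7} s) ∨
    (PatG {5} {6} {7} s ∨ PatG {2} {3} {0,1,7} s ∨ PatG {3,6} {2,5} {0,7} s) := by
  intro n
  induction n with
  | zero => intro p s h; exact Or.inl h
  | succ n IH =>
    intro p s h
    have hrun : runA (delta p (s 0)) (Fin.tail s) = 4 := h
    have hcons : Fin.cons (s 0) (Fin.tail s) = s := Fin.cons_self_tail s
    rcases IH (delta p (s 0)) (Fin.tail s) hrun with h4 | ⟨h1, hc⟩ | ⟨h2, hc⟩ | ⟨h3, hc⟩ | hb | hb | hb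
    · rcases delta_eq_four h4 with hp | ⟨hp, hl⟩ | ⟨hp, hl⟩ | ⟨hp, hl⟩
      · exact Or.inl hp
      · exact Or.inr (Or.inl ⟨hp, hcons ▸ compG_start _ (by rw [hl]; exact Set.mem_singleton _)⟩)
      · exact Or.inr (Or.inr (Or.inl ⟨hp, hcons ▸ compG_start _
          (by rw [hl]; exact Set.mem_singleton _)⟩))
      · refine Or.inr (Or.inr (Or.inr (Or.inl ⟨hp, hcons ▸ compG_start _ ?_⟩)))
        rcases hl with hl | hl <;> rw [hl] <;> simp
    · rcases delta_eq_one h1 with hl | ⟨hp, hl⟩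
      · exact Or.inr (Or.inr (Or.inr (Or.inr (Or.inl
          (hcons ▸ compG_patG (by rw [hl]; exact Set.mem_singleton _) hc)))))
      · exact Or.inr (Or.inl ⟨hp, hcons ▸ compG_cons (by rw [hl]; exact Set.mem_singleton _) hc⟩)
    · rcases delta_eq_two h2 with hl | ⟨hp, hl⟩
      · exact Or.inr (Or.inr (Or.inr (Or.inr (Or.inr (Or.inl
          (hcons ▸ compG_patG (by rw [hl]; exact Set.mem_singleton _) hc))))))
      · refine Or.inr (Or.inr (Or.inl ⟨hp, hcons ▸ compG_cons ?_ hc⟩))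
        rcases hl with hl | hl | hl <;> rw [hl] <;> simp
    · rcases delta_eq_three h3 with hl | ⟨hp, hl⟩
      · refine Or.inr (Or.inr (Or.inr (Or.inr (Or.inr (Or.inr
          (hcons ▸ compG_patG ?_ hc))))))
        rcases hl with hl | hl <;> rw [hl] <;> simp
      · refine Or.inr (Or.inr (Or.inr (Or.inl ⟨hp, hcons ▸ compG_cons ?_ hc⟩)))
        rcases hl with hl | hl <;> rw [hl] <;> simp
    · exact Or.inr (Or.inr (Or.inr (Or.inr (Or.inl (hcons ▸ patG_cons hb)))))
    · exact Or.inr (Or.inr (Or.inr (Or.inr (Or.inr (Or.inl (hcons ▸ patG_cons hb))))))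
    · exact Or.inr (Or.inr (Or.inr (Or.inr (Or.inr (Or.inr (hcons ▸ patG_cons hb))))))
lemma runA_succ {n : ℕ} (p : Fin 5) (s : Fin (n+1) → Fin 8) :
    runA p s = runA (delta p (s 0)) (Fin.tail s) := rfl

lemma runA_cons {n : ℕ} (p : Fin 5) (l : Fin 8) (s : Fin n → Fin 8) :
    runA p (Fin.cons l s) = runA (delta p l) s := by
  rw [runA_succ, Fin.cons_zero, Fin.tail_cons]

noncomputable def w : Fin 5 → ℝ :=
  ![1000000000000, 891245409818, 837448180663, 657218104830, 0]

noncomputable def betaR : ℝ := 70431298002 / 10 ^ 10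

lemma w_nonneg (q : Fin 5) : 0 ≤ w q := by
  fin_cases q <;> norm_num [w]

lemma one_le_w {q : Fin 5} (h : q ≠ 4) : 1 ≤ w q := by
  fin_cases q <;> first | (exact absurd rfl h) | norm_num [w]

lemma key (p : Fin 5) : (∑ l : Fin 8, w (delta p l)) ≤ betaR * w p := by
  have h0 : (∑ l : Fin 8, w (delta 0 l)) ≤ betaR * w 0 := by
    rw [Fin.sum_univ_eight]
    simp only [show delta 0 0 = 0 from by decide, show delta 0 1 = 0 from by decide, show delta 0 2 = 2 from by decide, show delta 0 3 = 3 from by decide, show delta 0 4 = 0 from by decide, show delta 0 5 = 1 from by decide, show delta 0 6 = 3 from by decide, show delta 0 7 = 0 from by decide]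
    simp only [show w 2 = 837448180663 from rfl, show w 3 = 657218104830 from rfl, show w 4 = 0 from rfl]
    norm_num [w, betaR]
  have h1 : (∑ l : Fin 8, w (delta 1 l)) ≤ betaR * w 1 := by
    rw [Fin.sum_univ_eight]
    simp only [show delta 1 0 = 0 from by decide, show delta 1 1 = 0 from by decide, show delta 1 2 = 2 from by decide, show delta 1 3 = 3 from by decide, show delta 1 4 = 0 from by decide, show delta 1 5 = 1 from by decide, show delta 1 6 = 4 from by decide, show delta 1 7 = 1 from by decide]
    simp only [show w 2 = 837448180663 from rfl, show w 3 = 657218104830 from rfl, show w 4 = 0 from rfl]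
    norm_num [w, betaR]
  have h2 : (∑ l : Fin 8, w (delta 2 l)) ≤ betaR * w 2 := by
    rw [Fin.sum_univ_eight]
    simp only [show delta 2 0 = 2 from by decide, show delta 2 1 = 2 from by decide, show delta 2 2 = 2 from by decide, show delta 2 3 = 4 from by decide, show delta 2 4 = 0 from by decide, show delta 2 5 = 1 from by decide, show delta 2 6 = 3 from by decide, show delta 2 7 = 2 from by decide]
    simp only [show w 2 = 837448180663 from rfl, show w 3 = 657218104830 from rfl, show w 4 = 0 from rfl]
    norm_num [w, betaR]
  have h3 : (∑ l : Fin 8, w (delta 3 l)) ≤ betaR * w 3 := by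
    rw [Fin.sum_univ_eight]
    simp only [show delta 3 0 = 3 from by decide, show delta 3 1 = 0 from by decide, show delta 3 2 = 4 from by decide, show delta 3 3 = 3 from by decide, show delta 3 4 = 0 from by decide, show delta 3 5 = 4 from by decide, show delta 3 6 = 3 from by decide, show delta 3 7 = 3 from by decide]
    simp only [show w 2 = 837448180663 from rfl, show w 3 = 657218104830 from rfl, show w 4 = 0 from rfl]
    norm_num [w, betaR]
  have h4 : (∑ l : Fin 8, w (delta 4 l)) ≤ betaR * w 4 := by
    rw [Fin.sum_univ_eight]
    simp only [show delta 4 0 = 4 from by decide, show delta 4 1 = 4 from by decide, show delta 4 2 = 4 from by decide, show delta 4 3 = 4 from by decide, show delta 4 4 = 4 from by decide, show delta 4 5 = 4 from by decide, show delta 4 6 = 4 from by decide, show delta 4 7 = 4 from by decide]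
    simp only [show w 2 = 837448180663 from rfl, show w 3 = 657218104830 from rfl, show w 4 = 0 from rfl]
    norm_num [w, betaR]
  fin_cases p
  exacts [h0, h1, h2, h3, h4]

lemma betaR_pos : 0 < betaR := by norm_num [betaR]

instance : Unique (Fin 0 → Fin 8) :=
  ⟨⟨fun i => i.elim0⟩, fun f => funext fun i => i.elim0⟩

lemma run_sum : ∀ (n : ℕ) (p : Fin 5),
    (∑ s : Fin n → Fin 8, w (runA p s)) ≤ w p * betaR ^ n := by
  intro n
  induction n with
  | zero =>
    intro p
    rw [Fintype.sum_unique]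
    simp [runA]
  | succ n IH =>
    intro p
    have e1 : (∑ s : Fin (n+1) → Fin 8, w (runA p s)) =
        ∑ x : Fin 8 × (Fin n → Fin 8), w (runA (delta p x.1) x.2) := by
      refine (Fintype.sum_equiv (Fin.consEquiv (fun _ => Fin 8))
        (fun x => w (runA (delta p x.1) x.2)) (fun s => w (runA p s))
        (fun x => ?_)).symm
      show w (runA (delta p x.1) x.2) = w (runA p (Fin.cons x.1 x.2))
      rw [runA_cons]
    rw [e1, Fintype.sum_prod_type]
    calc (∑ l : Fin 8, ∑ t : Fin n → Fin 8, w (runA (delta p l) t))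
        ≤ ∑ l : Fin 8, w (delta p l) * betaR ^ n :=
          Finset.sum_le_sum (fun l _ => IH (delta p l))
      _ = (∑ l : Fin 8, w (delta p l)) * betaR ^ n := by rw [Finset.sum_mul]
      _ ≤ (betaR * w p) * betaR ^ n := by
          exact mul_le_mul_of_nonneg_right (key p) (pow_nonneg betaR_pos.le n)
      _ = w p * betaR ^ (n+1) := by ring


lemma avoids_append {m n : ℕ} {u : Fin m → Fin 8} {v : Fin n → Fin 8}
    (hu : Avoids u) (hv : Avoids v) : Avoids (Fin.append u (Fin.cons 4 v)) := by
  rw [avoids_iff] at hu hv ⊢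
  refine ⟨fun h => ?_, fun h => ?_, fun h => ?_⟩
  · rcases patG_append_split (by simp) (by simp) (by simp) h with h | h
    · exact hu.1 h
    · exact hv.1 h
  · rcases patG_append_split (by simp) (by simp) (by simp) h with h | h
    · exact hu.2.1 h
    · exact hv.2.1 h
  · rcases patG_append_split (by simp) (by simp) (by simp) h with h | h
    · exact hu.2.2 h
    · exact hv.2.2 h

lemma avoids_run {n : ℕ} {s : Fin n → Fin 8} (hA : Avoids s) : runA 0 s ≠ 4 := by
  intro h4
  have hA' := (avoids_iff s).mp hA
  rcases sound 0 s h4 with h | ⟨h, _⟩ | ⟨h, _⟩ | ⟨h, _⟩ | hb | hb | hb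
  · exact absurd h (by decide)
  · exact absurd h (by decide)
  · exact absurd h (by decide)
  · exact absurd h (by decide)
  · exact hA'.1 hb
  · exact hA'.2.1 hb
  · exact hA'.2.2 hb

lemma admCount8_def (n : ℕ) : admCount8 n = Nat.card {s : Fin n → Fin 8 // Avoids s} := rfl

lemma submult (m n : ℕ) : admCount8 (m+n) ≤ admCount8 m * admCount8 n := by
  have h := Nat.card_le_card_of_injective
    (α := {s : Fin (m+n) → Fin 8 // Avoids s})
    (β := {s : Fin m → Fin 8 // Avoids s} × {s : Fin n → Fin 8 // Avoids s})
    (fun s => (⟨fun i => s.1 (Fin.castAdd n i), avoids_left s.2⟩,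
      ⟨fun i => s.1 (Fin.natAdd m i), avoids_right s.2⟩)) ?_
  · rw [Nat.card_prod] at h
    exact h
  · intro s t hst
    have h1 : (fun i => s.1 (Fin.castAdd n i)) = fun i => t.1 (Fin.castAdd n i) := by
      have := congrArg (fun x => x.1.1) hst
      exact this
    have h2 : (fun i => s.1 (Fin.natAdd m i)) = fun i => t.1 (Fin.natAdd m i) := by
      have := congrArg (fun x => x.2.1) hst
      exact this
    apply Subtype.ext
    funext k
    refine Fin.addCases (fun i => ?_) (fun i => ?_) k
    · exact congrFun h1 i
    · exact congrFun h2 i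

lemma supermult (m n : ℕ) : admCount8 m * admCount8 n ≤ admCount8 (m+(n+1)) := by
  have h := Nat.card_le_card_of_injective
    (α := {s : Fin m → Fin 8 // Avoids s} × {s : Fin n → Fin 8 // Avoids s})
    (β := {s : Fin (m+(n+1)) → Fin 8 // Avoids s})
    (fun x => ⟨Fin.append x.1.1 (Fin.cons 4 x.2.1), avoids_append x.1.2 x.2.2⟩) ?_
  · rw [Nat.card_prod] at h
    exact h
  · intro x y hxy
    have hval : Fin.append x.1.1 (Fin.cons 4 x.2.1) = Fin.append y.1.1 (Fin.cons 4 y.2.1) :=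
      congrArg Subtype.val hxy
    have h1 : x.1.1 = y.1.1 := by
      funext i
      have := congrFun hval (Fin.castAdd (n+1) i)
      rwa [Fin.append_left, Fin.append_left] at this
    have h2 : x.2.1 = y.2.1 := by
      funext i
      have := congrFun hval (Fin.natAdd m i.succ)
      rwa [Fin.append_right, Fin.append_right, Fin.cons_succ, Fin.cons_succ] at this
    exact Prod.ext (Subtype.ext h1) (Subtype.ext h2)

lemma two_pow_le (n : ℕ) : 2^n ≤ admCount8 n := by
  have key2 : ∀ x y : Fin 2,
      ((if x = 0 then (0:Fin 8) else 4) = (if y = 0 then 0 else 4)) → x = y := by decide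
  have h := Nat.card_le_card_of_injective
    (α := Fin n → Fin 2) (β := {s : Fin n → Fin 8 // Avoids s})
    (fun b => ⟨fun k => if b k = 0 then 0 else 4, ?_, ?_, ?_⟩) ?_
  · rwa [Nat.card_eq_fintype_card (α := Fin n → Fin 2), Fintype.card_fun,
      Fintype.card_fin, Fintype.card_fin] at h
  · rintro ⟨i, j, hij, hA, hB, hC⟩
    by_cases h : b i = 0 <;> simp [h] at hA <;> exact absurd hA (by decide)
  · rintro ⟨i, j, hij, hA, hB, hC⟩
    by_cases h : b i = 0 <;> simp [h] at hA <;> exact absurd hA (by decide)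
  · rintro ⟨i, j, hij, hA, hB, hC⟩
    have hval : (if b i = 0 then (0:Fin 8) else 4) = 0 ∨
        (if b i = 0 then (0:Fin 8) else 4) = 4 := by
      by_cases h : b i = 0 <;> simp [h]
    simp only [Set.mem_insert_iff, Set.mem_singleton_iff] at hA
    rcases hval with hv | hv <;> rw [hv] at hA <;>
      rcases hA with hA | hA <;> revert hA <;> decide
  · intro b b' hb
    funext k
    have := congrFun (congrArg Subtype.val hb) k
    exact key2 _ _ this

lemma le_eight_pow (n : ℕ) : admCount8 n ≤ 8^n := by
  have h := Nat.card_le_card_of_injective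
    (α := {s : Fin n → Fin 8 // Avoids s}) (β := Fin n → Fin 8)
    Subtype.val Subtype.val_injective
  rwa [Nat.card_eq_fintype_card (α := Fin n → Fin 8), Fintype.card_fun,
    Fintype.card_fin, Fintype.card_fin] at h

lemma a_zero : admCount8 0 = 1 := by
  have h1 := two_pow_le 0
  have h2 := le_eight_pow 0
  omega

lemma count_le (n : ℕ) : (admCount8 n : ℝ) ≤ 1000000000000 * betaR ^ n := by
  classical
  have e1 : admCount8 n = (Finset.univ.filter (fun s : Fin n → Fin 8 => Avoids s)).card := by
    rw [admCount8_def, Nat.card_eq_fintype_card, Fintype.card_subtype]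
  have e2 : ((Finset.univ.filter (fun s : Fin n → Fin 8 => Avoids s)).card : ℝ) =
      ∑ s : Fin n → Fin 8, if Avoids s then (1:ℝ) else 0 := (Finset.sum_boole _ _).symm
  have e3 : (∑ s : Fin n → Fin 8, if Avoids s then (1:ℝ) else 0) ≤
      ∑ s : Fin n → Fin 8, w (runA 0 s) := by
    refine Finset.sum_le_sum (fun s _ => ?_)
    by_cases h : Avoids s
    · rw [if_pos h]
      exact one_le_w (avoids_run h)
    · rw [if_neg h]
      exact w_nonneg _
  have e4 := run_sum n 0
  have e5 : w 0 = 1000000000000 := by norm_num [w]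
  rw [e1, e2]
  calc (∑ s : Fin n → Fin 8, if Avoids s then (1:ℝ) else 0)
      ≤ ∑ s : Fin n → Fin 8, w (runA 0 s) := e3
    _ ≤ w 0 * betaR ^ n := e4
    _ = 1000000000000 * betaR ^ n := by rw [e5]

end Adm8

theorem admissible_strings8_growth :
    ∃ α c₁ c₂ : ℝ, 0 < c₁ ∧ 0 < c₂ ∧ 1 < α ∧ α < 7.04313 ∧
      ∀ n : ℕ, c₁ * α ^ n ≤ (admCount8 n : ℝ) ∧
        (admCount8 n : ℝ) ≤ c₂ * α ^ n := by
  classical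
  open Adm8 Filter Real in
  have apos : ∀ n, 0 < admCount8 n := fun n =>
    lt_of_lt_of_le (pow_pos (by norm_num : (0:ℕ) < 2) n) (two_pow_le n)
  have aposR : ∀ n, (0:ℝ) < (admCount8 n : ℝ) := fun n => by exact_mod_cast apos n
  have a1R : ∀ n, (1:ℝ) ≤ (admCount8 n : ℝ) := fun n => by exact_mod_cast apos n
  set u : ℕ → ℝ := fun n => Real.log (admCount8 n) with hu
  have hu0 : u 0 = 0 := by simp [hu, a_zero]
  have hsubu : Subadditive u := by
    intro m n
    have hmn : (admCount8 (m+n) : ℝ) ≤ (admCount8 m : ℝ) * admCount8 n := by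
      exact_mod_cast submult m n
    calc u (m+n) ≤ Real.log ((admCount8 m : ℝ) * admCount8 n) :=
          Real.log_le_log (aposR _) hmn
      _ = u m + u n := Real.log_mul (aposR m).ne' (aposR n).ne'
  have hbdd : BddBelow (Set.range fun n => u n / n) := by
    refine ⟨0, ?_⟩
    rintro x ⟨n, rfl⟩
    exact div_nonneg (Real.log_nonneg (a1R n)) (Nat.cast_nonneg n)
  set L := hsubu.lim with hLdef
  have htend : Tendsto (fun n => u n / n) atTop (nhds L) := hsubu.tendsto_lim hbdd
  have hlow : ∀ n : ℕ, n ≠ 0 → L ≤ u n / n := fun n hn => hsubu.lim_le_div hbdd hn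
  have hL2 : Real.log 2 ≤ L := by
    refine ge_of_tendsto htend ?_
    filter_upwards [Filter.eventually_atTop.mpr ⟨1, fun (n:ℕ) hn => hn⟩] with n hn
    have h2n : ((2:ℝ))^n ≤ (admCount8 n : ℝ) := by exact_mod_cast two_pow_le n
    have hlogs : (n : ℝ) * Real.log 2 ≤ u n := by
      calc (n:ℝ) * Real.log 2 = Real.log ((2:ℝ)^n) := by rw [Real.log_pow]
        _ ≤ u n := Real.log_le_log (pow_pos two_pos n) h2n
    have hnpos : (0:ℝ) < n := by exact_mod_cast hn
    rw [le_div_iff₀ hnpos]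
    linarith
  have hbetapos : (0:ℝ) < betaR := betaR_pos
  have hbeta1 : (1:ℝ) ≤ betaR := by norm_num [betaR]
  have hLbeta : L ≤ Real.log betaR := by
    have hub : ∀ n : ℕ, u n / n ≤ Real.log 1000000000000 / n + Real.log betaR := by
      intro n
      rcases Nat.eq_zero_or_pos n with rfl | hn
      · simp [hu0]
        exact Real.log_nonneg hbeta1
      · have hc : (admCount8 n : ℝ) ≤ 1000000000000 * betaR ^ n := count_le n
        have hlog : u n ≤ Real.log 1000000000000 + n * Real.log betaR := by
          calc u n ≤ Real.log (1000000000000 * betaR ^ n) := Real.log_le_log (aposR n) hc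
            _ = Real.log 1000000000000 + Real.log (betaR ^ n) :=
                Real.log_mul (by norm_num) (pow_pos hbetapos n).ne'
            _ = _ := by rw [Real.log_pow]
        have hnpos : (0:ℝ) < n := by exact_mod_cast hn
        rw [div_le_iff₀ hnpos, add_mul, div_mul_cancel₀ _ hnpos.ne']
        linarith
    have htend2 : Tendsto (fun n : ℕ => Real.log 1000000000000 / n + Real.log betaR)
        atTop (nhds (0 + Real.log betaR)) :=
      (tendsto_const_div_atTop_nhds_zero_nat _).add tendsto_const_nhds
    have := le_of_tendsto_of_tendsto' htend htend2 hub
    simpa using this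
  -- supermultiplicative side
  set g : ℕ → ℝ := fun n => u (n - 1) with hg
  have hsupg : Subadditive (fun n => -g n) := by
    intro m n
    rcases Nat.eq_zero_or_pos m with rfl | hm
    · simp [hg, hu0]
    rcases Nat.eq_zero_or_pos n with rfl | hn
    · simp [hg, hu0]
    have hmul : (admCount8 (m-1) : ℝ) * admCount8 (n-1) ≤ admCount8 (m + n - 1) := by
      have h := supermult (m-1) (n-1)
      have hidx2 : (m-1) + ((n-1)+1) = m + n - 1 := by omega
      rw [hidx2] at h
      exact_mod_cast h
    have hstep : g m + g n ≤ g (m+n) := by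
      have : g (m+n) = Real.log (admCount8 (m+n-1)) := rfl
      rw [this]
      calc g m + g n
          = Real.log ((admCount8 (m-1) : ℝ) * admCount8 (n-1)) :=
            (Real.log_mul (aposR _).ne' (aposR _).ne').symm
        _ ≤ Real.log (admCount8 (m+n-1)) :=
            Real.log_le_log (mul_pos (aposR _) (aposR _)) hmul
    simp only [neg_add_rev]
    linarith
  have hbddg : BddBelow (Set.range fun n => -g n / n) := by
    refine ⟨-Real.log 8, ?_⟩
    rintro x ⟨n, rfl⟩
    have h8 : (admCount8 (n-1) : ℝ) ≤ (8:ℝ)^n := by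
      calc (admCount8 (n-1) : ℝ) ≤ ((8:ℕ)^(n-1) : ℝ) := by exact_mod_cast le_eight_pow (n-1)
        _ = (8:ℝ)^(n-1) := by push_cast; ring
        _ ≤ (8:ℝ)^n := pow_le_pow_right₀ (by norm_num) (Nat.sub_le n 1)
    have hgn : g n ≤ (n:ℝ) * Real.log 8 := by
      calc g n ≤ Real.log ((8:ℝ)^n) := Real.log_le_log (aposR _) h8
        _ = n * Real.log 8 := by rw [Real.log_pow]
    rcases Nat.eq_zero_or_pos n with rfl | hn
    · simp
      exact Real.log_nonneg (by norm_num)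
    · have hnpos : (0:ℝ) < n := by exact_mod_cast hn
      rw [le_div_iff₀ hnpos]
      nlinarith
  set L' := hsupg.lim with hL'def
  have htendg : Tendsto (fun n => -g n / n) atTop (nhds L') := hsupg.tendsto_lim hbddg
  have htendg2 : Tendsto (fun n : ℕ => g n / n) atTop (nhds L) := by
    have hA : Tendsto (fun n : ℕ => u (n-1) / ((n-1 : ℕ):ℝ)) atTop (nhds L) :=
      htend.comp (tendsto_sub_atTop_nat 1)
    have hB : Tendsto (fun n : ℕ => ((n-1 : ℕ):ℝ) / n) atTop (nhds 1) := by
      have h1 : Tendsto (fun n : ℕ => 1 - 1/(n:ℝ)) atTop (nhds (1 - 0)) :=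
        tendsto_const_nhds.sub tendsto_one_div_atTop_nhds_zero_nat
      rw [sub_zero] at h1
      refine h1.congr' ?_
      filter_upwards [Filter.eventually_atTop.mpr ⟨1, fun (n:ℕ) hn => hn⟩] with n hn
      have hnpos : (0:ℝ) < n := by exact_mod_cast hn
      rw [Nat.cast_sub hn, Nat.cast_one]
      field_simp
    have heq : ∀ n : ℕ, (u (n-1) / ((n-1:ℕ):ℝ)) * (((n-1:ℕ):ℝ) / n) = g n / n := by
      intro n
      by_cases hc : ((n-1:ℕ):ℝ) = 0
      · have h0 : n - 1 = 0 := by exact_mod_cast hc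
        have : g n = 0 := by rw [hg]; simp only [h0, hu0]
        rw [this, hc]
        simp
      · have : g n = u (n-1) := rfl
        rw [this]
        field_simp
    have := (hA.mul hB).congr heq
    rwa [mul_one] at this
  have hLL' : L' = -L := by
    have h1 := htendg2.neg
    have heq2 : (fun n : ℕ => -(g n / n)) = fun n => -g n / n :=
      funext fun n => (neg_div _ _).symm
    rw [heq2] at h1
    exact tendsto_nhds_unique htendg h1
  set α : ℝ := Real.exp L with hα
  refine ⟨α, 1, α, one_pos, Real.exp_pos L, ?_, ?_, ?_⟩
  · have hl2 : (0:ℝ) < Real.log 2 := Real.log_pos (by norm_num)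
    calc (1:ℝ) = Real.exp 0 := Real.exp_zero.symm
      _ < Real.exp L := Real.exp_lt_exp.mpr (by linarith)
  · have h1 : α ≤ betaR := by
      calc α ≤ Real.exp (Real.log betaR) := Real.exp_le_exp.mpr hLbeta
        _ = betaR := Real.exp_log hbetapos
    have h2 : betaR < 7.04313 := by norm_num [betaR]
    linarith
  · intro n
    constructor
    · rw [one_mul]
      rcases Nat.eq_zero_or_pos n with rfl | hn
      · simp [a_zero]
      · have h := hlow n hn.ne'
        have hnpos : (0:ℝ) < n := by exact_mod_cast hn
        have h2 : L * n ≤ u n := (le_div_iff₀ hnpos).mp h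
        calc α ^ n = Real.exp ((n:ℝ) * L) := by rw [hα, Real.exp_nat_mul]
          _ ≤ Real.exp (u n) := Real.exp_le_exp.mpr (by linarith)
          _ = (admCount8 n : ℝ) := by rw [hu]; exact Real.exp_log (aposR n)
    · have h0 := hsupg.lim_le_div hbddg (n := n+1) (by omega)
      have h : -L ≤ -g (n+1) / ((n+1:ℕ):ℝ) := by rw [← hLL']; exact h0
      have hnpos : (0:ℝ) < ((n+1:ℕ):ℝ) := by exact_mod_cast n.succ_pos
      have h2 : -L * ((n+1:ℕ):ℝ) ≤ -g (n+1) := (le_div_iff₀ hnpos).mp h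
      have h3 : g (n+1) ≤ ((n+1:ℕ):ℝ) * L := by linarith
      have h4 : Real.log (admCount8 n) ≤ ((n+1:ℕ):ℝ) * L := by
        have he : g (n+1) = Real.log (admCount8 n) := by
          rw [hg]; simp [hu]
        linarith [he ▸ h3]
      calc (admCount8 n : ℝ) = Real.exp (Real.log (admCount8 n)) :=
            (Real.exp_log (aposR n)).symm
        _ ≤ Real.exp (((n+1:ℕ):ℝ) * L) := Real.exp_le_exp.mpr h4
        _ = α ^ (n+1) := by rw [hα, Real.exp_nat_mul]
        _ = α * α ^ n := by ring
end

section
/- The number of strings of length n over a 6-letter alphabet {c₁,...,c₆} containing no contiguous substring of the form c₅ (c₁|c₂|c₆)* c₄ is Θ(αⁿ) for a constant α < 5.61804, equal to the spectral radius of the transfer matrix of the associated pattern-avoiding automaton. -/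
/-!
Statement 19: the number of strings of length n over a 6-letter alphabet
{c₁,…,c₆} (encoded as Fin 6, cᵢ ↦ i − 1) containing no contiguous substring of
the form c₅ (c₁|c₂|c₆)* c₄ is Θ(αⁿ) for some constant α < 5.61804.
-/

/-- A contiguous occurrence of `c₅ (c₁|c₂|c₆)* c₄`. -/
def Pat {n : ℕ} (s : Fin n → Fin 6) : Prop :=
  ∃ i j : Fin n, i < j ∧ s i = 4 ∧ s j = 3 ∧
    ∀ k : Fin n, i < k → k < j → s k ∈ ({0, 1, 5} : Set (Fin 6))

/-- The number of strings of length `n` avoiding the pattern. -/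
noncomputable def admCount6 (n : ℕ) : ℕ :=
  Nat.card {s : Fin n → Fin 6 // ¬ Pat s}

/-- A dangerous string: there is a `c₅` followed only by letters in `{c₁,c₂,c₆}`. -/
def Dang {n : ℕ} (s : Fin n → Fin 6) : Prop :=
  ∃ i : Fin n, s i = 4 ∧ ∀ k : Fin n, i < k → s k ∈ ({0, 1, 5} : Set (Fin 6))

noncomputable def cntA (n : ℕ) : ℕ :=
  Nat.card {s : Fin n → Fin 6 // ¬ Pat s ∧ ¬ Dang s}

noncomputable def cntB (n : ℕ) : ℕ :=
  Nat.card {s : Fin n → Fin 6 // ¬ Pat s ∧ Dang s}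

lemma natCard_sigma {ι : Type*} [Fintype ι] (f : ι → Type*) [∀ i, Finite (f i)] :
    Nat.card ((i : ι) × f i) = ∑ i, Nat.card (f i) := by
  letI : ∀ i, Fintype (f i) := fun i => Fintype.ofFinite _
  simp [Nat.card_eq_fintype_card, Fintype.card_sigma]

lemma admCount6_eq (n : ℕ) : admCount6 n = cntA n + cntB n := by
  classical
  rw [admCount6, cntA, cntB]
  rw [← Nat.card_congr (Equiv.sumCompl (fun s : {s : Fin n → Fin 6 // ¬ Pat s} => Dang s.val))]
  rw [Nat.card_sum, add_comm]
  congr 1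
  · exact Nat.card_congr (Equiv.subtypeSubtypeEquivSubtypeInter
      (fun s : Fin n → Fin 6 => ¬ Pat s) (fun s => ¬ Dang s))
  · exact Nat.card_congr (Equiv.subtypeSubtypeEquivSubtypeInter
      (fun s : Fin n → Fin 6 => ¬ Pat s) (fun s => Dang s))

lemma pat_snoc {n : ℕ} (s : Fin n → Fin 6) (a : Fin 6) :
    Pat (Fin.snoc s a) ↔ Pat s ∨ (Dang s ∧ a = 3) := by
  constructor
  · rintro ⟨i, j, hij, hi, hj, hbet⟩
    by_cases hjl : j = Fin.last n
    · subst hjl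
      right
      rw [Fin.snoc_last] at hj
      refine ⟨?_, hj⟩
      obtain ⟨i', rfl⟩ := Fin.exists_castSucc_eq.mpr (ne_of_lt hij)
      rw [Fin.snoc_castSucc] at hi
      refine ⟨i', hi, fun k hk => ?_⟩
      have := hbet k.castSucc (by simpa using hk) (Fin.castSucc_lt_last k)
      simpa using this
    · obtain ⟨j', rfl⟩ := Fin.exists_castSucc_eq.mpr hjl
      left
      obtain ⟨i', rfl⟩ := Fin.exists_castSucc_eq.mpr
        (ne_of_lt (lt_trans hij (Fin.castSucc_lt_last j')))
      rw [Fin.snoc_castSucc] at hi hj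
      refine ⟨i', j', by simpa using hij, hi, hj, fun k h1 h2 => ?_⟩
      have := hbet k.castSucc (by simpa using h1) (by simpa using h2)
      simpa using this
  · rintro (⟨i, j, hij, hi, hj, hbet⟩ | ⟨⟨i, hi, hall⟩, ha⟩)
    · refine ⟨i.castSucc, j.castSucc, by simpa using hij, by simpa using hi,
        by simpa using hj, fun k h1 h2 => ?_⟩
      obtain ⟨k', rfl⟩ := Fin.exists_castSucc_eq.mpr
        (ne_of_lt (lt_trans h2 (Fin.castSucc_lt_last j)))
      rw [Fin.snoc_castSucc]
      exact hbet k' (by simpa using h1) (by simpa using h2)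
    · refine ⟨i.castSucc, Fin.last n, Fin.castSucc_lt_last i, by simpa using hi,
        by simpa [Fin.snoc_last] using ha, fun k h1 h2 => ?_⟩
      obtain ⟨k', rfl⟩ := Fin.exists_castSucc_eq.mpr (ne_of_lt h2)
      rw [Fin.snoc_castSucc]
      exact hall k' (by simpa using h1)

lemma dang_snoc {n : ℕ} (s : Fin n → Fin 6) (a : Fin 6) :
    Dang (Fin.snoc s a) ↔ a = 4 ∨ (Dang s ∧ a ∈ ({0, 1, 5} : Set (Fin 6))) := by
  constructor
  · rintro ⟨i, hi, hall⟩
    by_cases hil : i = Fin.last n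
    · subst hil
      left
      simpa [Fin.snoc_last] using hi
    · obtain ⟨i', rfl⟩ := Fin.exists_castSucc_eq.mpr hil
      right
      rw [Fin.snoc_castSucc] at hi
      constructor
      · refine ⟨i', hi, fun k hk => ?_⟩
        have := hall k.castSucc (by simpa using hk)
        simpa using this
      · have := hall (Fin.last n) (Fin.castSucc_lt_last i')
        simpa [Fin.snoc_last] using this
  · rintro (ha | ⟨⟨i, hi, hall⟩, ha⟩)
    · refine ⟨Fin.last n, by simp [Fin.snoc_last, ha], fun k hk => ?_⟩
      exact absurd hk (not_lt.mpr (Fin.le_last k))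
    · refine ⟨i.castSucc, by simpa using hi, fun k hk => ?_⟩
      by_cases hkl : k = Fin.last n
      · subst hkl; simpa [Fin.snoc_last] using ha
      · obtain ⟨k', rfl⟩ := Fin.exists_castSucc_eq.mpr hkl
        rw [Fin.snoc_castSucc]
        exact hall k' (by simpa using hk)

/-- Equivalence `Fin 6 × (Fin n → Fin 6) ≃ (Fin (n+1) → Fin 6)` via `snoc`. -/
def snocEquiv (n : ℕ) : (Fin 6 × (Fin n → Fin 6)) ≃ (Fin (n + 1) → Fin 6) where
  toFun p := Fin.snoc p.2 p.1
  invFun f := (f (Fin.last n), Fin.init f)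
  left_inv p := by simp [Fin.init_snoc]
  right_inv f := by simp [Fin.snoc_init_self]

lemma card_snoc {n : ℕ} (Q : (Fin (n + 1) → Fin 6) → Prop) :
    Nat.card {s : Fin (n + 1) → Fin 6 // Q s} =
      ∑ a : Fin 6, Nat.card {s : Fin n → Fin 6 // Q (Fin.snoc s a)} := by
  classical
  rw [← natCard_sigma]
  refine Nat.card_congr ?_
  refine Equiv.trans ((snocEquiv n).symm.subtypeEquiv (fun f => ?_))
    (Equiv.subtypeProdEquivSigmaSubtype (fun (a : Fin 6) (s : Fin n → Fin 6) => Q (Fin.snoc s a)))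
  show Q f ↔ Q (Fin.snoc (Fin.init f) (f (Fin.last n)))
  rw [Fin.snoc_init_self]

lemma card_empty_pred {n : ℕ} {P : (Fin n → Fin 6) → Prop} (h : ∀ s, ¬ P s) :
    Nat.card {s : Fin n → Fin 6 // P s} = 0 := by
  have : IsEmpty {s : Fin n → Fin 6 // P s} := ⟨fun ⟨s, hs⟩ => h s hs⟩
  exact Nat.card_of_isEmpty

lemma cntA_succ (n : ℕ) : cntA (n + 1) = 5 * cntA n + cntB n := by
  rw [cntA, card_snoc (fun s => ¬ Pat s ∧ ¬ Dang s), Fin.sum_univ_six]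
  have e0 : ∀ a : Fin 6, a = 0 ∨ a = 1 ∨ a = 5 →
      Nat.card {s : Fin n → Fin 6 // ¬ Pat (Fin.snoc s a) ∧ ¬ Dang (Fin.snoc s a)} = cntA n := by
    intro a ha
    refine Nat.card_congr (Equiv.subtypeEquivRight (fun s => ?_))
    rw [pat_snoc, dang_snoc]
    rcases ha with rfl | rfl | rfl <;> simp [Set.mem_insert_iff] <;> try tauto
  have e3 : Nat.card {s : Fin n → Fin 6 // ¬ Pat (Fin.snoc s (3:Fin 6)) ∧
      ¬ Dang (Fin.snoc s (3:Fin 6))} = cntA n := by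
    refine Nat.card_congr (Equiv.subtypeEquivRight (fun s => ?_))
    rw [pat_snoc, dang_snoc]
    simp [Set.mem_insert_iff]
    try tauto
  have e2 : Nat.card {s : Fin n → Fin 6 // ¬ Pat (Fin.snoc s (2:Fin 6)) ∧
      ¬ Dang (Fin.snoc s (2:Fin 6))} = cntA n + cntB n := by
    rw [← admCount6_eq, admCount6]
    refine Nat.card_congr (Equiv.subtypeEquivRight (fun s => ?_))
    rw [pat_snoc, dang_snoc]
    simp [Set.mem_insert_iff]
  have e4 : Nat.card {s : Fin n → Fin 6 // ¬ Pat (Fin.snoc s (4:Fin 6)) ∧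
      ¬ Dang (Fin.snoc s (4:Fin 6))} = 0 := by
    refine card_empty_pred (fun s hs => ?_)
    exact hs.2 ((dang_snoc s 4).mpr (Or.inl rfl))
  rw [e0 0 (by tauto), e0 1 (by tauto), e0 5 (by tauto), e2, e3, e4]
  ring

lemma cntB_succ (n : ℕ) : cntB (n + 1) = cntA n + 4 * cntB n := by
  rw [cntB, card_snoc (fun s => ¬ Pat s ∧ Dang s), Fin.sum_univ_six]
  have e0 : ∀ a : Fin 6, a = 0 ∨ a = 1 ∨ a = 5 →
      Nat.card {s : Fin n → Fin 6 // ¬ Pat (Fin.snoc s a) ∧ Dang (Fin.snoc s a)} = cntB n := by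
    intro a ha
    refine Nat.card_congr (Equiv.subtypeEquivRight (fun s => ?_))
    rw [pat_snoc, dang_snoc]
    rcases ha with rfl | rfl | rfl <;> simp [Set.mem_insert_iff] <;> try tauto
  have e2 : Nat.card {s : Fin n → Fin 6 // ¬ Pat (Fin.snoc s (2:Fin 6)) ∧
      Dang (Fin.snoc s (2:Fin 6))} = 0 := by
    refine card_empty_pred (fun s hs => ?_)
    have := (dang_snoc s 2).mp hs.2
    simp [Set.mem_insert_iff] at this
  have e3 : Nat.card {s : Fin n → Fin 6 // ¬ Pat (Fin.snoc s (3:Fin 6)) ∧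
      Dang (Fin.snoc s (3:Fin 6))} = 0 := by
    refine card_empty_pred (fun s hs => ?_)
    have := (dang_snoc s 3).mp hs.2
    simp [Set.mem_insert_iff] at this
  have e4 : Nat.card {s : Fin n → Fin 6 // ¬ Pat (Fin.snoc s (4:Fin 6)) ∧
      Dang (Fin.snoc s (4:Fin 6))} = cntA n + cntB n := by
    rw [← admCount6_eq, admCount6]
    refine Nat.card_congr (Equiv.subtypeEquivRight (fun s => ?_))
    rw [pat_snoc, dang_snoc]
    simp [Set.mem_insert_iff]
  rw [e0 0 (by tauto), e0 1 (by tauto), e0 5 (by tauto), e2, e3, e4]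
  ring

lemma cntA_zero : cntA 0 = 1 := by
  rw [cntA]
  have hP : ∀ s : Fin 0 → Fin 6, ¬ Pat s ∧ ¬ Dang s := by
    intro s
    constructor
    · rintro ⟨i, -⟩; exact i.elim0
    · rintro ⟨i, -⟩; exact i.elim0
  have : Unique {s : Fin 0 → Fin 6 // ¬ Pat s ∧ ¬ Dang s} :=
    { default := ⟨fun i => i.elim0, hP _⟩,
      uniq := fun ⟨s, _⟩ => Subtype.ext (funext fun i => i.elim0) }
  exact Nat.card_unique

lemma cntB_zero : cntB 0 = 0 := by
  rw [cntB]
  refine card_empty_pred (fun s hs => ?_)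
  rcases hs.2 with ⟨i, -⟩
  exact i.elim0

theorem admissible_strings6_growth :
    ∃ α c₁ c₂ : ℝ, 0 < c₁ ∧ 0 < c₂ ∧ 1 < α ∧ α < 5.61804 ∧
      ∀ n : ℕ, c₁ * α ^ n ≤ (admCount6 n : ℝ) ∧
        (admCount6 n : ℝ) ≤ c₂ * α ^ n := by
  set r : ℝ := Real.sqrt 5 with hr
  have hr2 : r ^ 2 = 5 := Real.sq_sqrt (by norm_num)
  have hrpos : (0:ℝ) < r := Real.sqrt_pos.mpr (by norm_num)
  have hr2lt : (2:ℝ) < r := by nlinarith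
  have hr3 : r < 3 := by nlinarith
  set α : ℝ := (9 + r) / 2 with hα
  set β : ℝ := (r - 1) / 2 with hβ
  have hβpos : 0 < β := by rw [hβ]; linarith
  have hβlt : β < 1 := by rw [hβ]; linarith
  have hα5 : α = 5 + β := by rw [hα, hβ]; ring
  have h1 : (1:ℝ) + 4 * β = α * β := by rw [hα, hβ]; nlinarith
  have key : ∀ n : ℕ, (cntA n : ℝ) + β * (cntB n : ℝ) = α ^ n := by
    intro n
    induction n with
    | zero => simp [cntA_zero, cntB_zero]
    | succ m ih =>
      rw [cntA_succ, cntB_succ, pow_succ, ← ih]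
      push_cast
      nlinarith [hα5, h1, ih]
  refine ⟨α, 1, 1 / β, one_pos, by positivity, ?_, ?_, fun n => ?_⟩
  · rw [hα]; linarith
  · rw [hα]; nlinarith
  have hA : (0:ℝ) ≤ (cntA n : ℝ) := Nat.cast_nonneg _
  have hB : (0:ℝ) ≤ (cntB n : ℝ) := Nat.cast_nonneg _
  have hk := key n
  constructor
  · rw [admCount6_eq]
    push_cast
    nlinarith
  · rw [admCount6_eq]
    push_cast
    rw [div_mul_eq_mul_div, le_div_iff₀ hβpos]
    nlinarith
end
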